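/- Let R be a discrete valuation domain with prime element p, β an ordinal, and P_β the Walker module. For every ordinal α ≤ β one has p^αP_β = X_α, where X_α is the submodule of P_β generated by all generators ββ₁β₂…β_nα ending in α. In particular, p^βP_β = ⟨β⟩ ≅ R/(p) and p^{β+1}P_β = 0, so P_β is a reduced torsion module of length β + 1. -/

import Mathlib

universe u v w

open Ordinal

noncomputable def pPow (R : Type u) [CommRing R] (p : R) (G : Type v) [AddCommGroup G]
    [Module R G] (σ : Ordinal.{w}) : Submodule R G :=
  Ordinal.limitRecOn σ ⊤ (fun _ N => N.map (LinearMap.lsmul R G p))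
    (fun o _ ih => ⨅ ρ : Set.Iio o, ih ρ.1 ρ.2)

/-- Generators of the Walker module `P β`: strictly decreasing finite sequences of ordinals
starting with `β` (encoded by their tails). -/
def WalkerGen (β : Ordinal.{w}) : Type (w + 1) :=
  {l : List Ordinal.{w} // (β :: l).Chain' (· > ·)}

/-- The defining relation of the Walker module attached to a generator `g`:
`p • g - g'` where `g'` is obtained by deleting the last entry of `g`
(interpreted as `0` when `g` is the length-one sequence `β`). -/
noncomputable def walkerRel (R : Type u) [CommRing R] (p : R) (β : Ordinal.{w})
    (g : WalkerGen β) : WalkerGen β →₀ R :=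
  p • Finsupp.single g 1 -
    if _h : g.1 = [] then 0
    else Finsupp.single
      ⟨g.1.dropLast, g.2.sublist ((g.1.dropLast_sublist).cons₂ β)⟩ 1

/-- The Walker module `P β` over a discrete valuation domain with prime `p`. -/
noncomputable abbrev WalkerModule (R : Type u) [CommRing R] (p : R) (β : Ordinal.{w}) :=
  (WalkerGen β →₀ R) ⧸ Submodule.span R (Set.range (walkerRel R p β))

/-- The image in `P β` of a generator. -/
noncomputable def walkerMk (R : Type u) [CommRing R] (p : R) (β : Ordinal.{w})
    (g : WalkerGen β) : WalkerModule R p β :=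
  Submodule.Quotient.mk (Finsupp.single g 1)

/-- The distinguished generator `β` of the Walker module `P β`. -/
noncomputable def walkerTop (R : Type u) [CommRing R] (p : R) (β : Ordinal.{w}) :
    WalkerModule R p β :=
  walkerMk R p β ⟨[], List.isChain_singleton β⟩

/-- The submodule `X α` of `P β` generated by all generators ending in `α`. -/
noncomputable def walkerX (R : Type u) [CommRing R] (p : R) (β α : Ordinal.{w}) :
    Submodule R (WalkerModule R p β) :=
  Submodule.span R
    {x | ∃ g : WalkerGen β, (β :: g.1).getLast (List.cons_ne_nil β g.1) = α ∧
      x = walkerMk R p β g}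

/-!
Every element of `P_β` is represented by a finitely supported `f` none of whose nonzero
coefficients is divisible by `p`: rewrite `(p c) • g` as `c • g.parent` (or `0` at the root)
until this holds. Looking at a generator of maximal length shows that a combination of relations
cannot be such an `f` on a set of generators closed under extension unless it vanishes there.
So if a reduced `f` represents an element of `X_α`, every generator in its support ends in an
ordinal `≥ α`. This gives the limit step `⋂_{ρ<α} X_ρ = X_α` of the induction `p^α P_β = X_α`
(the successor step `p X_σ = X_{σ+1}` is read off the relations), and shows that the generator
ending in `σ` lies in `X_σ \ X_{σ+1}`.
-/

namespace WalkerGen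

variable {β : Ordinal.{w}}

def root (β : Ordinal.{w}) : WalkerGen β := ⟨[], List.isChain_singleton β⟩

def last (g : WalkerGen β) : Ordinal.{w} := (β :: g.1).getLast (List.cons_ne_nil β g.1)

def parent (g : WalkerGen β) : WalkerGen β :=
  ⟨g.1.dropLast, g.2.sublist ((g.1.dropLast_sublist).cons_cons β)⟩

def extend (g : WalkerGen β) (α : Ordinal.{w}) (h : α < g.last) : WalkerGen β :=
  ⟨g.1 ++ [α], by
    change List.IsChain _ ((β :: g.1) ++ [α])
    rw [List.isChain_append]
    refine ⟨g.2, List.isChain_singleton α, fun x hx y hy => ?_⟩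
    rw [List.getLast?_eq_some_getLast (List.cons_ne_nil _ _), Option.mem_def, Option.some_inj] at hx
    simp only [List.head?_cons, Option.mem_def, Option.some_inj] at hy
    exact hy ▸ hx ▸ h⟩

lemma eq_root_of_eq_nil {g : WalkerGen β} (hg : g.1 = []) : g = root β := Subtype.ext hg

@[simp]
lemma last_root : (root β).last = β := rfl

lemma last_eq_getLast {g : WalkerGen β} (hg : g.1 ≠ []) : g.last = g.1.getLast hg :=
  List.getLast_cons hg

lemma last_lt {g : WalkerGen β} (hg : g.1 ≠ []) : g.last < β := by
  rw [last_eq_getLast hg]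
  exact (List.pairwise_cons.mp (List.isChain_iff_pairwise.mp g.2)).1 _ (List.getLast_mem hg)

lemma eq_root_of_last_eq {g : WalkerGen β} (hg : g.last = β) : g = root β :=
  eq_root_of_eq_nil (by_contra fun hne => (last_lt hne).ne hg)

lemma last_le (g : WalkerGen β) : g.last ≤ β := by
  rcases eq_or_ne g.1 [] with hg | hg
  · rw [eq_root_of_eq_nil hg, last_root]
  · exact (last_lt hg).le

lemma last_lt_last_parent {g : WalkerGen β} (hg : g.1 ≠ []) : g.last < g.parent.last := by
  have hc : List.IsChain (· > ·) ((β :: g.1.dropLast) ++ [g.1.getLast hg]) := by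
    rw [List.cons_append, List.dropLast_append_getLast hg]
    exact g.2
  rw [List.isChain_append] at hc
  rw [last_eq_getLast hg]
  exact hc.2.2 _ (List.getLast?_eq_some_getLast (List.cons_ne_nil _ _)) _ rfl

lemma length_parent {g : WalkerGen β} (hg : g.1 ≠ []) : g.parent.1.length + 1 = g.1.length := by
  have := List.length_pos_iff.mpr hg
  simp only [parent, List.length_dropLast]
  omega

lemma parent_ne {g : WalkerGen β} (hg : g.1 ≠ []) : g.parent ≠ g := fun h => by
  have := length_parent hg
  rw [h] at this
  omega

lemma extend_ne_nil (g : WalkerGen β) (α : Ordinal.{w}) (h : α < g.last) :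
    (g.extend α h).1 ≠ [] := by
  simp [extend]

@[simp]
lemma last_extend (g : WalkerGen β) (α : Ordinal.{w}) (h : α < g.last) :
    (g.extend α h).last = α := by
  rw [last_eq_getLast (extend_ne_nil g α h)]
  exact List.getLast_concat

@[simp]
lemma parent_extend (g : WalkerGen β) (α : Ordinal.{w}) (h : α < g.last) :
    (g.extend α h).parent = g :=
  Subtype.ext (by simp [parent, extend])

lemma exists_last_eq {α : Ordinal.{w}} (hα : α ≤ β) : ∃ g : WalkerGen β, g.last = α := by
  rcases hα.lt_or_eq with hα | hα
  · exact ⟨(root β).extend α hα, last_extend _ _ _⟩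
  · exact ⟨root β, hα.symm⟩

end WalkerGen

open WalkerGen

section pPow

variable (R : Type u) [CommRing R] (p : R) (G : Type v) [AddCommGroup G] [Module R G]

lemma pPow_zero : pPow R p G (0 : Ordinal.{w}) = ⊤ :=
  Ordinal.limitRecOn_zero _ _ _

lemma pPow_add_one (o : Ordinal.{w}) :
    pPow R p G (o + 1) = (pPow R p G o).map (LinearMap.lsmul R G p) :=
  Ordinal.limitRecOn_add_one _ _ _ _

lemma pPow_limit {o : Ordinal.{w}} (ho : Order.IsSuccLimit o) :
    pPow R p G o = ⨅ ρ : Set.Iio o, pPow R p G ρ.1 :=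
  Ordinal.limitRecOn_limit _ _ _ _ ho

end pPow

def IsPReduced {R : Type u} [CommRing R] {ι : Type*} (p : R) (f : ι →₀ R) : Prop :=
  ∀ i, p ∣ f i → f i = 0

lemma isPReduced_single {R : Type u} [CommRing R] {ι : Type*} {p c : R} (hc : ¬p ∣ c) (i : ι) :
    IsPReduced p (Finsupp.single i c) := by
  classical
  intro j hj
  rw [Finsupp.single_apply] at hj ⊢
  split_ifs at hj ⊢
  · exact absurd hj hc
  · rfl

section WalkerModule

variable (R : Type u) [CommRing R] (p : R) (β : Ordinal.{w})

noncomputable abbrev walkerRelations : Submodule R (WalkerGen β →₀ R) :=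
  Submodule.span R (Set.range (walkerRel R p β))

lemma walkerRel_root : walkerRel R p β (root β) = p • Finsupp.single (root β) 1 := by
  simp [walkerRel, root]

lemma walkerRel_of_ne_nil {g : WalkerGen β} (hg : g.1 ≠ []) :
    walkerRel R p β g = p • Finsupp.single g 1 - Finsupp.single g.parent 1 := by
  rw [walkerRel, dif_neg hg]
  rfl

lemma walkerRel_apply_self (g : WalkerGen β) : walkerRel R p β g g = p := by
  rcases eq_or_ne g.1 [] with hg | hg
  · rw [eq_root_of_eq_nil hg, walkerRel_root]
    simp
  · rw [walkerRel_of_ne_nil R p β hg]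
    simp [Finsupp.single_eq_of_ne' (parent_ne hg)]

lemma walkerRel_apply_eq_zero {g h : WalkerGen β} (hgh : g ≠ h) (hpar : g.1 ≠ [] → g.parent ≠ h) :
    walkerRel R p β g h = 0 := by
  rcases eq_or_ne g.1 [] with hg | hg
  · rw [eq_root_of_eq_nil hg] at hgh ⊢
    rw [walkerRel_root]
    simp [Finsupp.single_eq_of_ne' hgh]
  · rw [walkerRel_of_ne_nil R p β hg]
    simp [Finsupp.single_eq_of_ne' hgh, Finsupp.single_eq_of_ne' (hpar hg)]

lemma smul_walkerTop : p • walkerTop R p β = 0 := by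
  change p • Submodule.Quotient.mk (Finsupp.single (root β) 1) = 0
  rw [← Submodule.Quotient.mk_smul, Submodule.Quotient.mk_eq_zero]
  exact walkerRel_root R p β ▸ Submodule.subset_span ⟨_, rfl⟩

lemma smul_walkerMk {g : WalkerGen β} (hg : g.1 ≠ []) :
    p • walkerMk R p β g = walkerMk R p β g.parent := by
  rw [walkerMk, walkerMk, ← Submodule.Quotient.mk_smul, Submodule.Quotient.eq,
    ← walkerRel_of_ne_nil R p β hg]
  exact Submodule.subset_span ⟨g, rfl⟩

lemma walkerMk_mem_walkerX {α : Ordinal.{w}} {g : WalkerGen β} (h : α ≤ g.last) :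
    walkerMk R p β g ∈ walkerX R p β α := by
  rcases h.lt_or_eq with h | h
  · have hsmul := smul_walkerMk R p β (extend_ne_nil g α h)
    rw [parent_extend] at hsmul
    rw [← hsmul]
    exact Submodule.smul_mem _ p (Submodule.subset_span ⟨_, last_extend g α h, rfl⟩)
  · exact Submodule.subset_span ⟨g, h.symm, rfl⟩

lemma walkerX_antitone : Antitone (walkerX R p β) := fun _ _ h => by
  rw [walkerX, Submodule.span_le]
  rintro _ ⟨g, hg, rfl⟩
  exact walkerMk_mem_walkerX R p β (h.trans hg.ge)

lemma walkerX_eq_map_supported (α : Ordinal.{w}) :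
    walkerX R p β α =
      (Finsupp.supported R R {g : WalkerGen β | α ≤ g.last}).map (walkerRelations R p β).mkQ := by
  apply le_antisymm
  · rw [walkerX, Submodule.span_le]
    rintro _ ⟨g, hg, rfl⟩
    exact ⟨Finsupp.single g 1, Finsupp.single_mem_supported R 1 hg.ge, rfl⟩
  · rw [Finsupp.supported_eq_span_single, Submodule.map_span, Submodule.span_le]
    rintro _ ⟨_, ⟨g, hg, rfl⟩, rfl⟩
    exact walkerMk_mem_walkerX R p β hg

lemma walkerX_zero : walkerX R p β 0 = ⊤ := by
  have huniv : {g : WalkerGen β | (0 : Ordinal.{w}) ≤ g.last} = Set.univ :=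
    Set.eq_univ_of_forall fun g => (zero_le : 0 ≤ g.last)
  rw [walkerX_eq_map_supported, huniv, Finsupp.supported_univ, Submodule.map_top,
    Submodule.range_mkQ]

lemma walkerX_self : walkerX R p β β = R ∙ walkerTop R p β := by
  rw [walkerX]
  congr 1
  ext x
  constructor
  · rintro ⟨g, hg, rfl⟩
    rw [eq_root_of_last_eq hg]
    rfl
  · rintro rfl
    exact ⟨root β, rfl, rfl⟩

lemma walkerX_eq_bot_of_lt {α : Ordinal.{w}} (h : β < α) : walkerX R p β α = ⊥ := by
  rw [walkerX, Submodule.span_eq_bot]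
  rintro _ ⟨g, hg, rfl⟩
  have hg : g.last = α := hg
  exact absurd (last_le g) (not_le.2 (hg ▸ h))

lemma map_lsmul_walkerX (o : Ordinal.{w}) :
    (walkerX R p β o).map (LinearMap.lsmul R _ p) = walkerX R p β (o + 1) := by
  apply le_antisymm
  · rw [walkerX, Submodule.map_span, Submodule.span_le]
    rintro _ ⟨_, ⟨g, hg, rfl⟩, rfl⟩
    have hg : g.last = o := hg
    rw [SetLike.mem_coe, LinearMap.lsmul_apply]
    rcases eq_or_ne g.1 [] with hnil | hnil
    · rw [eq_root_of_eq_nil hnil]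
      exact (smul_walkerTop R p β).symm ▸ zero_mem _
    · rw [smul_walkerMk R p β hnil]
      exact walkerMk_mem_walkerX R p β (Order.add_one_le_of_lt (hg ▸ last_lt_last_parent hnil))
  · rw [walkerX, Submodule.span_le]
    rintro _ ⟨g, hg, rfl⟩
    have ho : o < g.last := (Order.lt_add_one_iff.2 le_rfl).trans_eq hg.symm
    refine ⟨walkerMk R p β (g.extend o ho), walkerMk_mem_walkerX R p β (last_extend g o ho).ge, ?_⟩
    rw [LinearMap.lsmul_apply, smul_walkerMk R p β (extend_ne_nil g o ho), parent_extend]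

end WalkerModule

section NormalForm

variable (R : Type u) [CommRing R] (p : R) (β : Ordinal.{w})

lemma linearCombination_walkerRel_apply {a : WalkerGen β →₀ R} {h : WalkerGen β}
    (ha : ∀ g : WalkerGen β, g.1 ≠ [] → g.parent = h → a g = 0) :
    Finsupp.linearCombination R (walkerRel R p β) a h = a h * p := by
  rw [Finsupp.linearCombination_apply, Finsupp.sum, Finsupp.finsetSum_apply,
    Finset.sum_eq_single h]
  · rw [Finsupp.smul_apply, walkerRel_apply_self, _root_.smul_eq_mul]
  · intro g _ hgh
    by_cases hpar : g.1 ≠ [] ∧ g.parent = h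
    · rw [ha g hpar.1 hpar.2, zero_smul, Finsupp.zero_apply]
    · rw [Finsupp.smul_apply, walkerRel_apply_eq_zero R p β hgh (fun hg => not_and.1 hpar hg),
        smul_zero]
  · intro hh
    rw [Finsupp.notMem_support_iff.1 hh, zero_smul, Finsupp.zero_apply]

lemma apply_eq_zero_of_mem_walkerRelations [IsDomain R] (hp0 : p ≠ 0)
    {S : Set (WalkerGen β)} (hS : ∀ g : WalkerGen β, g.1 ≠ [] → g.parent ∈ S → g ∈ S)
    {x : WalkerGen β →₀ R} (hx : x ∈ walkerRelations R p β)
    (hred : ∀ h ∈ S, p ∣ x h → x h = 0) : ∀ h ∈ S, x h = 0 := by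
  classical
  obtain ⟨a, rfl⟩ : x ∈ LinearMap.range (Finsupp.linearCombination R (walkerRel R p β)) := by
    rwa [Finsupp.range_linearCombination]
  suffices ha : ∀ h ∈ S, a h = 0 by
    intro h hh
    rw [linearCombination_walkerRel_apply R p β fun g hg hgh => ha g (hS g hg (hgh ▸ hh)),
      ha h hh, zero_mul]
  -- At a generator of maximal length with `a h ≠ 0`, the coordinate of `x` is `a h * p`.
  by_contra! hne
  obtain ⟨h₀, hh₀, ha₀⟩ := hne
  obtain ⟨h, hmem, hmax⟩ := (a.support.filter (· ∈ S)).exists_max_image (fun g => g.1.length)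
    ⟨h₀, Finset.mem_filter.2 ⟨Finsupp.mem_support_iff.2 ha₀, hh₀⟩⟩
  rw [Finset.mem_filter, Finsupp.mem_support_iff] at hmem
  have hchildren : ∀ g : WalkerGen β, g.1 ≠ [] → g.parent = h → a g = 0 := fun g hg hgh => by
    by_contra hag
    have hle := hmax g (Finset.mem_filter.2 ⟨Finsupp.mem_support_iff.2 hag, hS g hg (hgh ▸ hmem.2)⟩)
    have hlen := length_parent hg
    rw [hgh] at hlen
    omega
  have hxh := linearCombination_walkerRel_apply R p β hchildren
  have hzero := hred h hmem.2 (hxh ▸ dvd_mul_left p (a h))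
  rw [hxh] at hzero
  exact hmem.1 ((mul_eq_zero.1 hzero).resolve_right hp0)

def walkerWeight (f : WalkerGen β →₀ R) : ℕ := ∑ g ∈ f.support, (g.1.length + 1)

lemma exists_walkerWeight_lt {f : WalkerGen β →₀ R} (hf : ¬IsPReduced p f) :
    ∃ f', walkerWeight R β f' < walkerWeight R β f ∧ f - f' ∈ walkerRelations R p β := by
  classical
  obtain ⟨g, ⟨c, hc⟩, hg⟩ : ∃ g, p ∣ f g ∧ f g ≠ 0 := by simpa [IsPReduced] using hf
  set f' := f - c • walkerRel R p β g
  have hrel : walkerRel R p β g ∈ walkerRelations R p β := Submodule.subset_span ⟨g, rfl⟩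
  refine ⟨f', ?_, by simpa [f'] using Submodule.smul_mem _ c hrel⟩
  have hsupp : f'.support ⊆ (insert g.parent f.support).erase g := by
    intro h hh
    rw [Finsupp.mem_support_iff] at hh
    have hhg : h ≠ g := by
      rintro rfl
      exact hh (by simp [f', hc, walkerRel_apply_self, mul_comm])
    refine Finset.mem_erase.2 ⟨hhg, Finset.mem_insert.2 (or_iff_not_imp_left.2 fun hpar => ?_)⟩
    refine Finsupp.mem_support_iff.2 fun hfh => hh ?_
    simp [f', hfh, walkerRel_apply_eq_zero R p β (Ne.symm hhg) (fun _ => Ne.symm hpar)]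
  have hw : walkerWeight R β f = g.1.length + 1 + ∑ h ∈ f.support.erase g, (h.1.length + 1) :=
    (Finset.add_sum_erase _ _ (Finsupp.mem_support_iff.2 hg)).symm
  refine lt_of_le_of_lt (Finset.sum_le_sum_of_subset hsupp) ?_
  rcases eq_or_ne g.1 [] with hnil | hnil
  · have hpar : g.parent = g := Subtype.ext (by simp [parent, hnil])
    rw [hpar, Finset.erase_insert_eq_erase]
    omega
  · rw [Finset.erase_insert_of_ne (parent_ne hnil)]
    have hlen := length_parent hnil
    by_cases hmem : g.parent ∈ f.support.erase g
    · rw [Finset.insert_eq_of_mem hmem]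
      omega
    · rw [Finset.sum_insert hmem]
      omega

lemma exists_isPReduced_sub_mem (f : WalkerGen β →₀ R) :
    ∃ f', IsPReduced p f' ∧ f - f' ∈ walkerRelations R p β := by
  induction hn : walkerWeight R β f using Nat.strong_induction_on generalizing f with
  | _ n ih =>
    by_cases hf : IsPReduced p f
    · exact ⟨f, hf, by simp⟩
    obtain ⟨f₁, hlt, h₁⟩ := exists_walkerWeight_lt R p β hf
    obtain ⟨f', hf', h'⟩ := ih _ (hn ▸ hlt) f₁ rfl
    exact ⟨f', hf', by simpa using add_mem h₁ h'⟩

lemma le_last_of_mk_mem_walkerX [IsDomain R] (hp0 : p ≠ 0) {f : WalkerGen β →₀ R}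
    (hf : IsPReduced p f) {α : Ordinal.{w}}
    (hx : (Submodule.Quotient.mk f : WalkerModule R p β) ∈ walkerX R p β α)
    {g : WalkerGen β} (hg : f g ≠ 0) : α ≤ g.last := by
  rw [walkerX_eq_map_supported] at hx
  obtain ⟨z, hz, hzf⟩ := hx
  rw [SetLike.mem_coe, Finsupp.mem_supported'] at hz
  have hfz : ∀ h : WalkerGen β, h.last < α → (f - z) h = f h := fun h hh => by
    rw [Finsupp.sub_apply, hz h (not_le.2 hh), _root_.sub_zero]
  have hzero := apply_eq_zero_of_mem_walkerRelations R p β hp0 (S := {h | h.last < α})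
    (fun h hh hpar => (last_lt_last_parent hh).trans hpar)
    ((Submodule.Quotient.eq _).1 hzf.symm) (fun h hh => hfz h hh ▸ hf h)
  by_contra hlt
  exact hg (hfz g (not_le.1 hlt) ▸ hzero g (not_le.1 hlt))

end NormalForm

section Ulm

variable (R : Type u) [CommRing R] [IsDomain R] (p : R) (β : Ordinal.{w})

lemma iInf_walkerX_of_isSuccLimit (hp0 : p ≠ 0) {o : Ordinal.{w}} (ho : Order.IsSuccLimit o) :
    ⨅ ρ : Set.Iio o, walkerX R p β ρ.1 = walkerX R p β o := by
  refine le_antisymm (fun x hx => ?_) (le_iInf fun ρ => walkerX_antitone R p β ρ.2.le)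
  obtain ⟨f₀, rfl⟩ := Submodule.Quotient.mk_surjective _ x
  obtain ⟨f, hf, hsub⟩ := exists_isPReduced_sub_mem R p β f₀
  rw [(Submodule.Quotient.eq _).2 hsub] at hx ⊢
  rw [walkerX_eq_map_supported]
  refine ⟨f, (Finsupp.mem_supported' _ _).2 fun g hg => ?_, rfl⟩
  by_contra hfg
  have hsucc := ho.succ_lt (not_le.1 hg)
  exact (Order.lt_succ g.last).not_ge
    (le_last_of_mk_mem_walkerX R p β hp0 hf ((Submodule.mem_iInf _).1 hx ⟨_, hsucc⟩) hfg)

theorem pPow_walkerModule (hp0 : p ≠ 0) (α : Ordinal.{w}) :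
    pPow R p (WalkerModule R p β) α = walkerX R p β α := by
  induction α using Ordinal.limitRecOn with
  | zero => rw [pPow_zero, walkerX_zero]
  | add_one o ih => rw [pPow_add_one, ih, map_lsmul_walkerX]
  | limit o ho ih =>
    rw [pPow_limit _ _ _ ho, iInf_congr fun ρ : Set.Iio o => ih ρ.1 ρ.2, iInf_walkerX_of_isSuccLimit R p β hp0 ho]

lemma smul_walkerTop_eq_zero_iff (hp0 : p ≠ 0) (c : R) : c • walkerTop R p β = 0 ↔ p ∣ c := by
  refine ⟨fun h => ?_, fun ⟨d, hd⟩ => by rw [hd, mul_comm, mul_smul, smul_walkerTop, smul_zero]⟩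
  by_contra hc
  have hmem : Finsupp.single (root β) c ∈ walkerRelations R p β := by
    change c • Submodule.Quotient.mk (Finsupp.single (root β) 1) = 0 at h
    rwa [← Submodule.Quotient.mk_smul, Finsupp.smul_single_one,
      Submodule.Quotient.mk_eq_zero] at h
  have hzero := apply_eq_zero_of_mem_walkerRelations R p β hp0 (S := Set.univ)
    (fun _ _ _ => trivial) hmem (fun h _ => isPReduced_single hc _ h) (root β) trivial
  rw [Finsupp.single_eq_same] at hzero
  exact hc (hzero ▸ dvd_zero p)

lemma nonempty_span_walkerTop_equiv (hp0 : p ≠ 0) :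
    Nonempty ((R ∙ walkerTop R p β) ≃ₗ[R] R ⧸ Ideal.span {p}) := by
  have htors : Ideal.torsionOf R _ (walkerTop R p β) = Ideal.span {p} := by
    ext c
    rw [Ideal.mem_torsionOf_iff, smul_walkerTop_eq_zero_iff R p β hp0, Ideal.mem_span_singleton]
  exact ⟨(Ideal.quotTorsionOfEquivSpanSingleton R _ _).symm.trans (Submodule.quotEquivOfEq _ _ htors)⟩

lemma walkerX_add_one_ne (hp0 : p ≠ 0) (hpu : ¬IsUnit p) {σ : Ordinal.{w}} (hσ : σ ≤ β) :
    walkerX R p β (σ + 1) ≠ walkerX R p β σ := by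
  obtain ⟨g, hg⟩ := exists_last_eq hσ
  intro h
  have hmem : walkerMk R p β g ∈ walkerX R p β (σ + 1) :=
    h ▸ walkerMk_mem_walkerX R p β hg.ge
  have hle := le_last_of_mk_mem_walkerX R p β hp0
    (isPReduced_single (fun h1 => hpu (isUnit_of_dvd_one h1)) g) hmem (g := g) (by simp)
  rw [hg] at hle
  exact (Order.lt_add_one_iff.2 le_rfl).not_ge hle

omit [IsDomain R] in
lemma pow_smul_walkerMk (g : WalkerGen β) : p ^ (g.1.length + 1) • walkerMk R p β g = 0 := by
  induction hn : g.1.length generalizing g with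
  | zero =>
    rw [eq_root_of_eq_nil (List.eq_nil_of_length_eq_zero hn), zero_add, pow_one]
    exact smul_walkerTop R p β
  | succ n ih =>
    have hg : g.1 ≠ [] := List.ne_nil_of_length_eq_add_one hn
    rw [pow_succ, mul_smul, smul_walkerMk R p β hg, ih _ (by have := length_parent hg; omega)]

lemma isTorsion_walkerModule (hp0 : p ≠ 0) : Module.IsTorsion R (WalkerModule R p β) := by
  have hle : walkerX R p β 0 ≤ Submodule.torsion R (WalkerModule R p β) := by
    rw [walkerX, Submodule.span_le]
    rintro _ ⟨g, -, rfl⟩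
    exact ⟨⟨_, pow_mem (mem_nonZeroDivisors_of_ne_zero hp0) _⟩, pow_smul_walkerMk R p β g⟩
  intro x
  exact (Submodule.mem_torsion_iff x).1 (hle (walkerX_zero R p β ▸ Submodule.mem_top))

end Ulm

theorem stmt3_general (R : Type u) [CommRing R] [IsDomain R]
    (p : R) (hp : Irreducible p) (β : Ordinal.{w}) :
    (∀ α ≤ β, pPow R p (WalkerModule R p β) α = walkerX R p β α) ∧
    pPow R p (WalkerModule R p β) β = Submodule.span R {walkerTop R p β} ∧
    Nonempty ((↥(pPow R p (WalkerModule R p β) β)) ≃ₗ[R] R ⧸ Ideal.span {p}) ∧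
    pPow R p (WalkerModule R p β) (β + 1) = ⊥ ∧
    Module.IsTorsion R (WalkerModule R p β) ∧
    (∀ σ < β + 1,
      pPow R p (WalkerModule R p β) (σ + 1) ≠ pPow R p (WalkerModule R p β) σ) := by
  have hpPow := pPow_walkerModule R p β hp.ne_zero
  have htop : pPow R p (WalkerModule R p β) β = R ∙ walkerTop R p β := by
    rw [hpPow, walkerX_self]
  refine ⟨fun α _ => hpPow α, htop, ?_, ?_, isTorsion_walkerModule R p β hp.ne_zero,
    fun σ hσ => ?_⟩
  · rw [htop]
    exact nonempty_span_walkerTop_equiv R p β hp.ne_zero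
  · rw [hpPow]
    exact walkerX_eq_bot_of_lt R p β (Order.lt_add_one_iff.2 le_rfl)
  · rw [hpPow, hpPow]
    exact walkerX_add_one_ne R p β hp.ne_zero hp.not_isUnit (Order.lt_add_one_iff.1 hσ)

theorem stmt3 (R : Type u) [CommRing R] [IsDomain R] [IsDiscreteValuationRing R]
    (p : R) (hp : Irreducible p) (β : Ordinal.{w}) :
    (∀ α ≤ β, pPow R p (WalkerModule R p β) α = walkerX R p β α) ∧
    pPow R p (WalkerModule R p β) β = Submodule.span R {walkerTop R p β} ∧
    Nonempty ((↥(pPow R p (WalkerModule R p β) β)) ≃ₗ[R] R ⧸ Ideal.span {p}) ∧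
    pPow R p (WalkerModule R p β) (β + 1) = ⊥ ∧
    Module.IsTorsion R (WalkerModule R p β) ∧
    (∀ σ < β + 1,
      pPow R p (WalkerModule R p β) (σ + 1) ≠ pPow R p (WalkerModule R p β) σ) :=
  stmt3_general R p hp β
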